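/- (Shanks's identity, odd case) For every nonnegative integer L, ∑_{l=0}^{2L} q^{T_l} = ∑_{i=0}^{L} q^{i(2L+1)} (q^{2i+2};q^2)_{L-i} / (q^{2i+1};q^2)_{L-i}, where T_l = l(l+1)/2, as an identity of rational functions in q. -/
import Mathlib


/-- The q-Pochhammer symbol `(a;q)_n = ∏_{m=0}^{n-1} (1 - a q^m)`. -/
noncomputable def qPoch {K : Type*} [Field K] (a q : K) (n : ℕ) : K :=
  ∏ m ∈ Finset.range n, (1 - a * q ^ m)

/-- The Gaussian binomial coefficient `[m choose n]_q`, interpreted as `0`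
when `n < 0` or `m < n`. -/
noncomputable def qbinom {K : Type*} [Field K] (q : K) (m n : ℤ) : K :=
  if 0 ≤ n ∧ n ≤ m then
    qPoch q q m.toNat / (qPoch q q n.toNat * qPoch q q (m - n).toNat)
  else 0

/-- Triangular numbers `T n = n(n+1)/2`. -/
def T (n : ℕ) : ℕ := n * (n + 1) / 2

lemma qPoch_zero' {K : Type*} [Field K] (a q : K) : qPoch a q 0 = 1 := by
  simp [qPoch]

lemma qPoch_succ {K : Type*} [Field K] (a q : K) (n : ℕ) :
    qPoch a q (n + 1) = qPoch a q n * (1 - a * q ^ n) := by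
  simp [qPoch, Finset.prod_range_succ]

lemma qPoch_succ' {K : Type*} [Field K] (a q : K) (n : ℕ) :
    qPoch a q (n + 1) = (1 - a) * qPoch (a * q) q n := by
  unfold qPoch
  rw [Finset.prod_range_succ']
  simp only [pow_zero, mul_one, pow_succ]
  rw [mul_comm]
  congr 1
  exact Finset.prod_congr rfl fun m _ => by ring_nf

lemma qPoch_ne_zero {K : Type*} [Field K] (q : K)
    (hq : ∀ n : ℕ, 1 ≤ n → q ^ n ≠ 1) (k n : ℕ) :
    qPoch (q ^ (k + 1)) (q ^ 2) n ≠ 0 := by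
  unfold qPoch
  apply Finset.prod_ne_zero_iff.mpr
  intro m _
  have h : q ^ (k + 1) * (q ^ 2) ^ m = q ^ (k + 1 + 2 * m) := by
    rw [← pow_mul, ← pow_add]
  rw [h]
  intro hzero
  exact hq (k + 1 + 2 * m) (by omega) (sub_eq_zero.mp hzero).symm

lemma one_sub_pow_ne_zero {K : Type*} [Field K] (q : K)
    (hq : ∀ n : ℕ, 1 ≤ n → q ^ n ≠ 1) (k : ℕ) :
    (1 : K) - q ^ (k + 1) ≠ 0 := by
  intro h
  exact hq (k + 1) (by omega) (sub_eq_zero.mp h).symm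

/-- The WZ-style certificate for Shanks's identity. -/
noncomputable def gAux {K : Type*} [Field K] (q : K) (L i : ℕ) : K :=
  if i ≤ L then
    q ^ (i * (2 * L + 1)) * (1 - q ^ (2 * i)) *
      qPoch (q ^ (2 * i + 2)) (q ^ 2) (L - i) /
      ((1 - q ^ (2 * L + 1)) * qPoch (q ^ (2 * i + 1)) (q ^ 2) (L - i))
  else q ^ ((L + 1) * (2 * L + 1))

lemma gAux_of_le {K : Type*} [Field K] (q : K) {L i : ℕ} (h : i ≤ L) :
    gAux q L i = q ^ (i * (2 * L + 1)) * (1 - q ^ (2 * i)) *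
      qPoch (q ^ (2 * i + 2)) (q ^ 2) (L - i) /
      ((1 - q ^ (2 * L + 1)) * qPoch (q ^ (2 * i + 1)) (q ^ 2) (L - i)) := by
  rw [gAux, if_pos h]

lemma gAux_of_gt {K : Type*} [Field K] (q : K) {L i : ℕ} (h : L < i) :
    gAux q L i = q ^ ((L + 1) * (2 * L + 1)) := by
  rw [gAux, if_neg (by omega)]

/-- The core algebraic step for `i < L`, with `L = i + m + 1`. -/
lemma step_lemma {K : Type*} [Field K] (q C D : K) (i m : ℕ)
    (hD : D ≠ 0)
    (h1 : (1 : K) - q ^ (2 * i + 1) ≠ 0)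
    (h2 : (1 : K) - q ^ (2 * i + 2 * m + 3) ≠ 0) :
    q ^ (i * (2 * (i + m + 1 + 1) + 1)) *
        ((1 - q ^ (2 * i + 2)) * C * (1 - q ^ (2 * i + 2 * m + 4))) /
        ((1 - q ^ (2 * i + 1)) * D * (1 - q ^ (2 * i + 2 * m + 3)))
      = q ^ (i * (2 * (i + m + 1) + 1)) * ((1 - q ^ (2 * i + 2)) * C) /
          ((1 - q ^ (2 * i + 1)) * D)
        + (q ^ ((i + 1) * (2 * (i + m + 1) + 1)) * (1 - q ^ (2 * (i + 1))) * C /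
            ((1 - q ^ (2 * (i + m + 1) + 1)) * D)
          - q ^ (i * (2 * (i + m + 1) + 1)) * (1 - q ^ (2 * i)) *
              ((1 - q ^ (2 * i + 2)) * C) /
            ((1 - q ^ (2 * (i + m + 1) + 1)) * ((1 - q ^ (2 * i + 1)) * D))) := by
  have key : 2 * (i + m + 1) + 1 = 2 * i + 2 * m + 3 := by ring
  have h3 : (1 : K) - q ^ (2 * (i + m + 1) + 1) ≠ 0 := by rw [key]; exact h2
  have t1 : q ^ (i * (2 * (i + m + 1 + 1) + 1)) *
        ((1 - q ^ (2 * i + 2)) * C * (1 - q ^ (2 * i + 2 * m + 4))) /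
        ((1 - q ^ (2 * i + 1)) * D * (1 - q ^ (2 * i + 2 * m + 3)))
      = (q ^ (i * (2 * (i + m + 1 + 1) + 1)) *
          ((1 - q ^ (2 * i + 2)) * (1 - q ^ (2 * i + 2 * m + 4))) /
          ((1 - q ^ (2 * i + 1)) * (1 - q ^ (2 * i + 2 * m + 3)))) * C / D := by
    field_simp
    try ring
  have t2 : q ^ (i * (2 * (i + m + 1) + 1)) * ((1 - q ^ (2 * i + 2)) * C) /
        ((1 - q ^ (2 * i + 1)) * D)
      = (q ^ (i * (2 * (i + m + 1) + 1)) * (1 - q ^ (2 * i + 2)) /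
          (1 - q ^ (2 * i + 1))) * C / D := by
    field_simp
    try ring
  have t3 : q ^ ((i + 1) * (2 * (i + m + 1) + 1)) * (1 - q ^ (2 * (i + 1))) * C /
        ((1 - q ^ (2 * (i + m + 1) + 1)) * D)
      = (q ^ ((i + 1) * (2 * (i + m + 1) + 1)) * (1 - q ^ (2 * (i + 1))) /
          (1 - q ^ (2 * (i + m + 1) + 1))) * C / D := by
    field_simp
    try ring
  have t4 : q ^ (i * (2 * (i + m + 1) + 1)) * (1 - q ^ (2 * i)) *
        ((1 - q ^ (2 * i + 2)) * C) /
        ((1 - q ^ (2 * (i + m + 1) + 1)) * ((1 - q ^ (2 * i + 1)) * D))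
      = (q ^ (i * (2 * (i + m + 1) + 1)) * (1 - q ^ (2 * i)) *
          (1 - q ^ (2 * i + 2)) /
          ((1 - q ^ (2 * (i + m + 1) + 1)) * (1 - q ^ (2 * i + 1)))) * C / D := by
    field_simp
    try ring
  rw [t1, t2, t3, t4]
  have hs : q ^ (i * (2 * (i + m + 1 + 1) + 1)) *
        ((1 - q ^ (2 * i + 2)) * (1 - q ^ (2 * i + 2 * m + 4))) /
        ((1 - q ^ (2 * i + 1)) * (1 - q ^ (2 * i + 2 * m + 3)))
      = q ^ (i * (2 * (i + m + 1) + 1)) * (1 - q ^ (2 * i + 2)) /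
          (1 - q ^ (2 * i + 1))
        + (q ^ ((i + 1) * (2 * (i + m + 1) + 1)) * (1 - q ^ (2 * (i + 1))) /
            (1 - q ^ (2 * (i + m + 1) + 1))
          - q ^ (i * (2 * (i + m + 1) + 1)) * (1 - q ^ (2 * i)) *
              (1 - q ^ (2 * i + 2)) /
            ((1 - q ^ (2 * (i + m + 1) + 1)) * (1 - q ^ (2 * i + 1)))) := by
    rw [key]
    field_simp
    try ring
  rw [hs]
  ring

/-- Shanks's identity, odd case. -/
theorem stmt7 {K : Type*} [Field K] (L : ℕ) (q : K)
    (hq : ∀ n : ℕ, 1 ≤ n → q ^ n ≠ 1) :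
    ∑ l ∈ Finset.range (2 * L + 1), q ^ T l
      = ∑ i ∈ Finset.range (L + 1),
          q ^ (i * (2 * L + 1)) *
            qPoch (q ^ (2 * i + 2)) (q ^ 2) (L - i) /
            qPoch (q ^ (2 * i + 1)) (q ^ 2) (L - i) := by
  induction L with
  | zero => simp [qPoch, T]
  | succ L ih =>
    have hd : (1 : K) - q ^ (2 * L + 1) ≠ 0 := one_sub_pow_ne_zero q hq (2 * L)
    -- pointwise step identity
    have key : ∀ i ∈ Finset.range (L + 1),
        q ^ (i * (2 * (L + 1) + 1)) *
            qPoch (q ^ (2 * i + 2)) (q ^ 2) (L + 1 - i) /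
            qPoch (q ^ (2 * i + 1)) (q ^ 2) (L + 1 - i)
          = (q ^ (i * (2 * L + 1)) *
              qPoch (q ^ (2 * i + 2)) (q ^ 2) (L - i) /
              qPoch (q ^ (2 * i + 1)) (q ^ 2) (L - i))
            + (gAux q L (i + 1) - gAux q L i) := by
      intro i hi
      rw [Finset.mem_range] at hi
      rcases Nat.lt_or_ge i L with hiL | hiL
      · -- i < L
        obtain ⟨m, hm⟩ : ∃ m, L = i + m + 1 := ⟨L - i - 1, by omega⟩
        subst hm
        have e1 : i + m + 1 + 1 - i = m + 2 := by omega
        have e2 : i + m + 1 - i = m + 1 := by omega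
        have e3 : i + m + 1 - (i + 1) = m := by omega
        rw [gAux_of_le q (by omega : i ≤ i + m + 1),
            gAux_of_le q (by omega : i + 1 ≤ i + m + 1), e1, e2, e3]
        have s1 : qPoch (q ^ (2 * i + 2)) (q ^ 2) (m + 2)
            = qPoch (q ^ (2 * i + 2)) (q ^ 2) (m + 1) *
              (1 - q ^ (2 * i + 2 * m + 4)) := by
          have p : q ^ (2 * i + 2) * (q ^ 2) ^ (m + 1) = q ^ (2 * i + 2 * m + 4) := by
            rw [← pow_mul, ← pow_add]
            congr 1
            omega
          rw [qPoch_succ, p]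
        have s2 : qPoch (q ^ (2 * i + 1)) (q ^ 2) (m + 2)
            = qPoch (q ^ (2 * i + 1)) (q ^ 2) (m + 1) *
              (1 - q ^ (2 * i + 2 * m + 3)) := by
          have p : q ^ (2 * i + 1) * (q ^ 2) ^ (m + 1) = q ^ (2 * i + 2 * m + 3) := by
            rw [← pow_mul, ← pow_add]
            congr 1
            omega
          rw [qPoch_succ, p]
        have s3 : qPoch (q ^ (2 * i + 2)) (q ^ 2) (m + 1)
            = (1 - q ^ (2 * i + 2)) * qPoch (q ^ (2 * (i + 1) + 2)) (q ^ 2) m := by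
          have p : q ^ (2 * i + 2) * q ^ 2 = q ^ (2 * (i + 1) + 2) := by
            rw [← pow_add]
            exact congrArg (fun n => q ^ n) (by omega)
          rw [qPoch_succ', p]
        have s4 : qPoch (q ^ (2 * i + 1)) (q ^ 2) (m + 1)
            = (1 - q ^ (2 * i + 1)) * qPoch (q ^ (2 * (i + 1) + 1)) (q ^ 2) m := by
          have p : q ^ (2 * i + 1) * q ^ 2 = q ^ (2 * (i + 1) + 1) := by
            rw [← pow_add]
            exact congrArg (fun n => q ^ n) (by omega)
          rw [qPoch_succ', p]
        rw [s1, s2, s3, s4]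
        have hDne : qPoch (q ^ (2 * (i + 1) + 1)) (q ^ 2) m ≠ 0 := by
          have := qPoch_ne_zero q hq (2 * (i + 1)) m
          simpa using this
        have h1 : (1 : K) - q ^ (2 * i + 1) ≠ 0 := by
          have := one_sub_pow_ne_zero q hq (2 * i)
          simpa using this
        have h2 : (1 : K) - q ^ (2 * i + 2 * m + 3) ≠ 0 := by
          have := one_sub_pow_ne_zero q hq (2 * i + 2 * m + 2)
          simpa using this
        exact step_lemma q _ _ i m hDne h1 h2
      · -- i = L
        have hiEq : i = L := by omega
        subst hiEq
        rw [gAux_of_le q (le_refl i), gAux_of_gt q (by omega : i < i + 1)]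
        have e1 : i + 1 - i = 1 := by omega
        have e2 : i - i = 0 := by omega
        rw [e1, e2, qPoch_zero', qPoch_zero', qPoch_succ, qPoch_zero',
          qPoch_succ, qPoch_zero']
        have h1 : (1 : K) - q ^ (2 * i + 1) ≠ 0 := one_sub_pow_ne_zero q hq _
        have h2 : (1 : K) - q ^ (2 * i + 1) * (q ^ 2) ^ 0 ≠ 0 := by
          simpa using h1
        field_simp
        ring
    -- sum both sides
    have hT1 : T (2 * L + 1) = (L + 1) * (2 * L + 1) := by
      unfold T
      rw [show (2 * L + 1) * ((2 * L + 1) + 1) = 2 * ((L + 1) * (2 * L + 1)) by ring]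
      exact Nat.mul_div_cancel_left _ (by norm_num)
    have hT2 : T (2 * L + 1 + 1) = (L + 1) * (2 * (L + 1) + 1) := by
      unfold T
      rw [show (2 * L + 1 + 1) * ((2 * L + 1 + 1) + 1)
          = 2 * ((L + 1) * (2 * (L + 1) + 1)) by ring]
      exact Nat.mul_div_cancel_left _ (by norm_num)
    have hg0 : gAux q L 0 = 0 := by
      rw [gAux_of_le q (Nat.zero_le L)]
      simp
    have hgtop : gAux q L (L + 1) = q ^ ((L + 1) * (2 * L + 1)) :=
      gAux_of_gt q (by omega)
    have hLHS : ∑ l ∈ Finset.range (2 * (L + 1) + 1), q ^ T l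
        = (∑ l ∈ Finset.range (2 * L + 1), q ^ T l)
          + q ^ ((L + 1) * (2 * L + 1)) + q ^ ((L + 1) * (2 * (L + 1) + 1)) := by
      rw [show 2 * (L + 1) + 1 = 2 * L + 1 + 1 + 1 by ring,
        Finset.sum_range_succ, Finset.sum_range_succ, hT1, hT2]
      ring_nf
    have hRHS : ∑ i ∈ Finset.range (L + 1 + 1),
          q ^ (i * (2 * (L + 1) + 1)) *
            qPoch (q ^ (2 * i + 2)) (q ^ 2) (L + 1 - i) /
            qPoch (q ^ (2 * i + 1)) (q ^ 2) (L + 1 - i)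
        = (∑ i ∈ Finset.range (L + 1),
            q ^ (i * (2 * L + 1)) *
              qPoch (q ^ (2 * i + 2)) (q ^ 2) (L - i) /
              qPoch (q ^ (2 * i + 1)) (q ^ 2) (L - i))
          + q ^ ((L + 1) * (2 * L + 1)) + q ^ ((L + 1) * (2 * (L + 1) + 1)) := by
      rw [Finset.sum_range_succ, Finset.sum_congr rfl key, Finset.sum_add_distrib,
        Finset.sum_range_sub (gAux q L) (L + 1), hg0, hgtop, Nat.sub_self,
        qPoch_zero', qPoch_zero']
      ring
    rw [hLHS, hRHS, ih]
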